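/- Let f : ℝⁿ → ℝⁿ be continuously differentiable, and suppose there exist constants c > 0 and m ∈ ℕ such that ‖f(x)‖ ≤ c(1 + ‖x‖)^m and ‖Df(x)‖_op ≤ c(1 + ‖x‖)^m for all x ∈ ℝⁿ. Let ε be distributed according to the standard Gaussian measure N(0, Iₙ) on ℝⁿ. Then E‖ε + f(ε)‖² = n + 2 E[ Tr(Df(ε)) + (1/2)‖f(ε)‖² ]. -/

import Mathlib

open MeasureTheory ProbabilityTheory Real Filter
open scoped ENNReal NNReal

noncomputable section SteinAux

lemma poly_le_exp (k : ℕ) (x : ℝ) :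
    (1 + x ^ 2) ^ k ≤ (1 + 4 * k) ^ k * Real.exp (x ^ 2 / 4) := by
  rcases Nat.eq_zero_or_pos k with rfl | hk
  · simpa using Real.one_le_exp (by positivity)
  have hkpos : (0:ℝ) < k := by exact_mod_cast hk
  have key : 1 + x ^ 2 ≤ (1 + 4 * k) * Real.exp (x ^ 2 / 4 / k) := by
    have h2 : (1:ℝ) ≤ Real.exp (x ^ 2 / 4 / k) := Real.one_le_exp (by positivity)
    have h4 : (k:ℝ) * (x ^ 2 / 4 / k) = x ^ 2 / 4 := by field_simp
    have h5 := mul_le_mul_of_nonneg_left (Real.add_one_le_exp (x ^ 2 / 4 / k))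
      (show (0:ℝ) ≤ 1 + 4 * k by positivity)
    have h6 : (0:ℝ) ≤ x ^ 2 / 4 / k := by positivity
    nlinarith [sq_nonneg x]
  calc (1 + x ^ 2) ^ k ≤ ((1 + 4 * k) * Real.exp (x ^ 2 / 4 / k)) ^ k :=
        pow_le_pow_left₀ (by positivity) key k
    _ = (1 + 4 * k) ^ k * Real.exp (x ^ 2 / 4) := by
        rw [mul_pow, ← Real.exp_nat_mul]
        congr 1
        field_simp

lemma poly_gauss_le (k : ℕ) (x : ℝ) :
    (1 + x ^ 2) ^ k * Real.exp (-x ^ 2 / 2) ≤ (1 + 4 * k) ^ k * Real.exp (-(4⁻¹) * x ^ 2) := by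
  have h := mul_le_mul_of_nonneg_right (poly_le_exp k x) (Real.exp_nonneg (-x ^ 2 / 2))
  refine h.trans_eq ?_
  rw [mul_assoc, ← Real.exp_add]
  congr 2
  ring

lemma int_poly_gauss (k : ℕ) :
    Integrable (fun x : ℝ => (1 + x ^ 2) ^ k * Real.exp (-x ^ 2 / 2)) := by
  refine Integrable.mono' ((integrable_exp_neg_mul_sq (show (0:ℝ) < 4⁻¹ by norm_num)).const_mul
    ((1 + 4 * k) ^ k)) (Continuous.aestronglyMeasurable (by continuity)) (ae_of_all _ fun x => ?_)
  have h1 : (0:ℝ) ≤ (1 + x ^ 2) ^ k * Real.exp (-x ^ 2 / 2) := by positivity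
  rw [Real.norm_eq_abs, abs_of_nonneg h1]
  exact poly_gauss_le k x

lemma tendsto_exp_quarter (l : Filter ℝ) (hl : Tendsto (fun x : ℝ => x ^ 2) l atTop) :
    Tendsto (fun x : ℝ => Real.exp (-(4⁻¹) * x ^ 2)) l (nhds 0) := by
  have h2 : Tendsto (fun x : ℝ => -(4⁻¹) * x ^ 2) l atBot := by
    have := tendsto_neg_atTop_atBot.comp (hl.atTop_div_const (show (0:ℝ) < 4 by norm_num))
    refine this.congr fun x => ?_
    simp only [Function.comp_apply]
    ring
  exact Real.tendsto_exp_atBot.comp h2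

lemma tendsto_poly_gauss (k : ℕ) (l : Filter ℝ) (hl : Tendsto (fun x : ℝ => x ^ 2) l atTop) :
    Tendsto (fun x : ℝ => (1 + x ^ 2) ^ k * Real.exp (-x ^ 2 / 2)) l (nhds 0) := by
  have hb := (tendsto_exp_quarter l hl).const_mul ((1 + 4 * (k:ℝ)) ^ k)
  rw [mul_zero] at hb
  refine squeeze_zero (fun x => by positivity) (fun x => ?_) hb
  exact_mod_cast poly_gauss_le k x

lemma sq_tendsto_atTop : Tendsto (fun x : ℝ => x ^ 2) atTop atTop :=
  tendsto_pow_atTop two_ne_zero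

lemma sq_tendsto_atBot : Tendsto (fun x : ℝ => x ^ 2) atBot atTop := by
  have h1 : Tendsto (fun x : ℝ => |x|) atBot atTop := tendsto_abs_atBot_atTop
  have h2 : Tendsto (fun y : ℝ => y ^ 2) atTop atTop := tendsto_pow_atTop two_ne_zero
  have h := h2.comp h1
  exact h.congr fun x => by simp only [Function.comp_apply, sq_abs]


lemma gpdf_eq : gaussianPDFReal 0 1 = fun x => (Real.sqrt (2 * π))⁻¹ * Real.exp (-x ^ 2 / 2) := by
  funext x
  simp [gaussianPDFReal]

lemma gpdf_cont : Continuous (gaussianPDFReal 0 1) := by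
  rw [gpdf_eq]; continuity

lemma gaussian_eq_withDensity :
    gaussianReal 0 1 = volume.withDensity (fun x => ENNReal.ofReal (gaussianPDFReal 0 1 x)) := by
  rw [gaussianReal_of_var_ne_zero _ one_ne_zero]
  rfl

lemma integral_gaussian_eq (g : ℝ → ℝ) :
    ∫ x, g x ∂(gaussianReal 0 1) = ∫ x, g x * gaussianPDFReal 0 1 x := by
  rw [gaussian_eq_withDensity]
  have h : (fun x => ENNReal.ofReal (gaussianPDFReal 0 1 x))
      = fun x => ((gaussianPDFReal 0 1 x).toNNReal : ENNReal) := rfl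
  rw [h, integral_withDensity_eq_integral_smul ((measurable_gaussianPDFReal 0 1).real_toNNReal) g]
  congr 1
  funext x
  simp [NNReal.smul_def, Real.coe_toNNReal _ (gaussianPDFReal_nonneg 0 1 x), mul_comm]

lemma integrable_gaussian_iff (g : ℝ → ℝ) :
    Integrable g (gaussianReal 0 1)
      ↔ Integrable (fun x => g x * gaussianPDFReal 0 1 x) volume := by
  rw [gaussian_eq_withDensity]
  exact integrable_withDensity_iff (measurable_gaussianPDFReal 0 1).ennreal_ofReal
    (ae_of_all _ fun x => ENNReal.ofReal_lt_top) |>.trans (by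
      constructor <;> (intro h; refine h.congr (ae_of_all _ fun x => ?_)) <;>
        simp [ENNReal.toReal_ofReal (gaussianPDFReal_nonneg 0 1 x)])

lemma integrable_gauss_of_bound (k : ℕ) (C : ℝ) (g : ℝ → ℝ) (hg : Continuous g)
    (hb : ∀ x, |g x| ≤ C * (1 + x ^ 2) ^ k) : Integrable g (gaussianReal 0 1) := by
  have hC : 0 ≤ C := by
    have := (abs_nonneg (g 0)).trans (hb 0)
    simpa using this
  rw [integrable_gaussian_iff]
  refine Integrable.mono' ((int_poly_gauss k).const_mul (C * (Real.sqrt (2 * π))⁻¹))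
    ((hg.mul gpdf_cont).aestronglyMeasurable) (ae_of_all _ fun x => ?_)
  have hpdf : gaussianPDFReal 0 1 x = (Real.sqrt (2 * π))⁻¹ * Real.exp (-x ^ 2 / 2) := by
    rw [gpdf_eq]
  have h0 : (0:ℝ) ≤ (Real.sqrt (2 * π))⁻¹ := by positivity
  rw [Real.norm_eq_abs, abs_mul, hpdf, abs_of_nonneg (show (0:ℝ) ≤ (Real.sqrt (2 * π))⁻¹ * Real.exp (-x ^ 2 / 2) by positivity)]
  calc |g x| * ((Real.sqrt (2 * π))⁻¹ * Real.exp (-x ^ 2 / 2))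
      ≤ (C * (1 + x ^ 2) ^ k) * ((Real.sqrt (2 * π))⁻¹ * Real.exp (-x ^ 2 / 2)) := by
        apply mul_le_mul_of_nonneg_right (hb x) (by positivity)
    _ = C * (Real.sqrt (2 * π))⁻¹ * ((1 + x ^ 2) ^ k * Real.exp (-x ^ 2 / 2)) := by ring

lemma abs_le_one_add_sq (x : ℝ) : |x| ≤ 1 + x ^ 2 := by
  rcases abs_cases x with ⟨h, _⟩ | ⟨h, _⟩ <;> nlinarith [sq_nonneg x, sq_nonneg (x-1), sq_nonneg (x+1)]

/-- 1D Stein identity for the standard Gaussian. -/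
lemma stein1 (g : ℝ → ℝ) (hg : ContDiff ℝ 1 g) (C : ℝ) (k : ℕ)
    (h0 : ∀ x, |g x| ≤ C * (1 + x ^ 2) ^ k) (h1 : ∀ x, |deriv g x| ≤ C * (1 + x ^ 2) ^ k) :
    ∫ x, x * g x ∂(gaussianReal 0 1) = ∫ x, deriv g x ∂(gaussianReal 0 1) := by
  have hC : 0 ≤ C := by
    have := (abs_nonneg (g 0)).trans (h0 0)
    simpa using this
  set s : ℝ := (Real.sqrt (2 * π))⁻¹ with hs
  have hs0 : (0:ℝ) < s := by rw [hs]; positivity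
  set φ : ℝ → ℝ := fun x => s * Real.exp (-x ^ 2 / 2) with hφ
  have hφpos : ∀ x, 0 < φ x := fun x => by positivity
  have hφcont : Continuous φ := by rw [hφ]; continuity
  have hg' : Continuous (deriv g) := hg.continuous_deriv le_rfl
  have hgc : Continuous g := hg.continuous
  have hgd : ∀ x, HasDerivAt g (deriv g x) x := fun x => (hg.differentiable one_ne_zero x).hasDerivAt
  have hφd : ∀ x, HasDerivAt φ (-x * φ x) x := by
    intro x
    have h1 : HasDerivAt (fun y : ℝ => -y ^ 2 / 2) (-x) x := by
      have h := ((hasDerivAt_pow 2 x).neg.div_const 2)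
      have he : (-(↑2 * x ^ (2 - 1)) / 2 : ℝ) = -x := by push_cast; ring_nf
      exact he ▸ h
    have h2 := (Real.hasDerivAt_exp (-x ^ 2 / 2)).comp x h1
    have h3 := h2.const_mul s
    refine h3.congr_deriv ?_
    simp [hφ, Function.comp]
    ring
  set F : ℝ → ℝ := fun x => -(g x * φ x) with hF
  set h : ℝ → ℝ := fun x => (x * g x - deriv g x) * φ x with hh
  have hFd : ∀ x, HasDerivAt F (h x) x := by
    intro x
    have := ((hgd x).mul (hφd x)).neg
    refine this.congr_deriv ?_
    simp only [hh, hF]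
    ring
  have hbnd : ∀ x, ‖h x‖ ≤ (2 * C * s) * ((1 + x ^ 2) ^ (k + 1) * Real.exp (-x ^ 2 / 2)) := by
    intro x
    have e1 : |h x| = |x * g x - deriv g x| * φ x := by
      rw [hh, abs_mul, abs_of_pos (hφpos x)]
    have e2 : |x * g x - deriv g x| ≤ |x| * |g x| + |deriv g x| := by
      calc |x * g x - deriv g x| ≤ |x * g x| + |deriv g x| := abs_sub _ _
        _ = |x| * |g x| + |deriv g x| := by rw [abs_mul]
    have e3 : |x| * |g x| + |deriv g x| ≤ (1 + x ^ 2) * (C * (1 + x ^ 2) ^ k)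
        + C * (1 + x ^ 2) ^ k := by
      have := mul_le_mul (abs_le_one_add_sq x) (h0 x) (abs_nonneg _) (by positivity)
      linarith [h1 x]
    have e4 : (1 + x ^ 2) * (C * (1 + x ^ 2) ^ k) + C * (1 + x ^ 2) ^ k
        ≤ 2 * C * (1 + x ^ 2) ^ (k + 1) := by
      have hx1 : (1:ℝ) ≤ 1 + x ^ 2 := by nlinarith [sq_nonneg x]
      have hpk : (0:ℝ) < (1 + x ^ 2) ^ k := by positivity
      have h5 : C * (1 + x ^ 2) ^ k ≤ C * (1 + x ^ 2) ^ k * (1 + x ^ 2) :=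
        le_mul_of_one_le_right (mul_nonneg hC hpk.le) hx1
      calc (1 + x ^ 2) * (C * (1 + x ^ 2) ^ k) + C * (1 + x ^ 2) ^ k
          = C * (1 + x ^ 2) ^ k * (1 + x ^ 2) + C * (1 + x ^ 2) ^ k := by ring
        _ ≤ C * (1 + x ^ 2) ^ k * (1 + x ^ 2) + C * (1 + x ^ 2) ^ k * (1 + x ^ 2) := by
            linarith [h5]
        _ = 2 * C * (1 + x ^ 2) ^ (k + 1) := by rw [pow_succ]; ring
    rw [Real.norm_eq_abs, e1]
    calc |x * g x - deriv g x| * φ x ≤ (2 * C * (1 + x ^ 2) ^ (k + 1)) * φ x := by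
          apply mul_le_mul_of_nonneg_right _ (hφpos x).le
          linarith
      _ = (2 * C * s) * ((1 + x ^ 2) ^ (k + 1) * Real.exp (-x ^ 2 / 2)) := by
          rw [hφ]; ring
  have hhcont : Continuous h := by
    rw [hh]
    exact (((continuous_id.mul hgc).sub hg').mul hφcont)
  have hint : Integrable h volume := by
    refine Integrable.mono' ((int_poly_gauss (k + 1)).const_mul (2 * C * s))
      hhcont.aestronglyMeasurable (ae_of_all _ hbnd)
  have hFbound : ∀ x, ‖F x‖ ≤ (C * s) * ((1 + x ^ 2) ^ k * Real.exp (-x ^ 2 / 2)) := by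
    intro x
    rw [Real.norm_eq_abs, hF, abs_neg, abs_mul, abs_of_pos (hφpos x), hφ]
    calc |g x| * (s * Real.exp (-x ^ 2 / 2))
        ≤ (C * (1 + x ^ 2) ^ k) * (s * Real.exp (-x ^ 2 / 2)) :=
          mul_le_mul_of_nonneg_right (h0 x) (by positivity)
      _ = (C * s) * ((1 + x ^ 2) ^ k * Real.exp (-x ^ 2 / 2)) := by ring
  have hFtop : Tendsto F atTop (nhds 0) := by
    have hb := (tendsto_poly_gauss k atTop sq_tendsto_atTop).const_mul (C * s)
    rw [mul_zero] at hb
    exact squeeze_zero_norm hFbound hb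
  have hFbot : Tendsto F atBot (nhds 0) := by
    have hb := (tendsto_poly_gauss k atBot sq_tendsto_atBot).const_mul (C * s)
    rw [mul_zero] at hb
    exact squeeze_zero_norm hFbound hb
  have hIoi : ∫ x in Set.Ioi (0:ℝ), h x = 0 - F 0 :=
    integral_Ioi_of_hasDerivAt_of_tendsto' (fun x _ => hFd x) hint.integrableOn hFtop
  have hIic : ∫ x in Set.Iic (0:ℝ), h x = F 0 - 0 :=
    integral_Iic_of_hasDerivAt_of_tendsto' (fun x _ => hFd x) hint.integrableOn hFbot
  have htot : ∫ x, h x = 0 := by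
    rw [← intervalIntegral.integral_Iic_add_Ioi hint.integrableOn hint.integrableOn, hIoi, hIic]
    ring
  have hI1 : Integrable (fun x => x * g x) (gaussianReal 0 1) := by
    refine integrable_gauss_of_bound (k + 1) C _ (continuous_id.mul hgc) fun x => ?_
    rw [abs_mul]
    calc |x| * |g x| ≤ (1 + x ^ 2) * (C * (1 + x ^ 2) ^ k) :=
          mul_le_mul (abs_le_one_add_sq x) (h0 x) (abs_nonneg _) (by positivity)
      _ = C * (1 + x ^ 2) ^ (k + 1) := by rw [pow_succ]; ring
  have hI2 : Integrable (deriv g) (gaussianReal 0 1) := integrable_gauss_of_bound k C _ hg' h1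
  have key : ∫ x, (x * g x - deriv g x) ∂(gaussianReal 0 1) = 0 := by
    rw [integral_gaussian_eq]
    rw [show (fun x => (x * g x - deriv g x) * gaussianPDFReal 0 1 x) = h by
      funext x; rw [hh, gpdf_eq]]
    exact htot
  rw [integral_sub hI1 hI2] at key
  linarith

lemma integral_sq_gauss : ∫ x, x ^ 2 ∂(gaussianReal 0 1) = 1 := by
  have h := stein1 (fun x => x) contDiff_id 1 1 (fun x => by
      simpa using (abs_le_one_add_sq x).trans (by nlinarith [sq_nonneg x]))
    (fun x => by simp [deriv_id'']; nlinarith [sq_nonneg x])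
  simp only [deriv_id''] at h
  rw [show (fun x : ℝ => x ^ 2) = fun x : ℝ => x * x from funext fun x => sq x]
  rw [h, integral_const]
  simp
section SteinN

open Finset in
lemma one_add_sum_le_prod {n : ℕ} (a : Fin n → ℝ) (ha : ∀ i, 0 ≤ a i) :
    1 + ∑ i, a i ≤ ∏ i, (1 + a i) := by
  classical
  have key : ∀ s : Finset (Fin n), 1 + ∑ i ∈ s, a i ≤ ∏ i ∈ s, (1 + a i) := by
    intro s
    induction s using Finset.induction_on with
    | empty => simp
    | @insert j s hj ih =>
        rw [Finset.sum_insert hj, Finset.prod_insert hj]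
        have h1 : (0:ℝ) ≤ ∑ i ∈ s, a i := Finset.sum_nonneg fun i _ => ha i
        nlinarith [ha j, ih]
  exact key Finset.univ

lemma sqrtsum_le {n : ℕ} (x : Fin n → ℝ) :
    1 + Real.sqrt (∑ i, x i ^ 2) ≤ 2 ^ n * ∏ i, (1 + x i ^ 2) := by
  have h1 : Real.sqrt (∑ i, x i ^ 2) ≤ ∑ i, |x i| := by
    have hsq : ∑ i, x i ^ 2 = ∑ i, |x i| ^ 2 := by simp [sq_abs]
    have h2 : ∑ i, |x i| ^ 2 ≤ (∑ i, |x i|) ^ 2 :=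
      Finset.sum_sq_le_sq_sum_of_nonneg fun i _ => abs_nonneg _
    rw [hsq]
    calc Real.sqrt (∑ i, |x i| ^ 2) ≤ Real.sqrt ((∑ i, |x i|) ^ 2) := Real.sqrt_le_sqrt h2
      _ = ∑ i, |x i| := Real.sqrt_sq (Finset.sum_nonneg fun i _ => abs_nonneg _)
  have h2 : 1 + ∑ i, |x i| ≤ ∏ i, (1 + |x i|) := one_add_sum_le_prod _ fun i => abs_nonneg _
  have h3 : ∏ i, (1 + |x i|) ≤ ∏ i, (2 * (1 + x i ^ 2)) := by
    refine Finset.prod_le_prod (fun i _ => by positivity) fun i _ => ?_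
    nlinarith [abs_le_one_add_sq (x i), sq_nonneg (x i)]
  have h4 : ∏ i, (2 * (1 + x i ^ 2)) = 2 ^ n * ∏ i, (1 + x i ^ 2) := by
    rw [Finset.prod_mul_distrib, Finset.prod_const]
    simp
  linarith

lemma abs_apply_le_sqrt_sum {n : ℕ} (a : Fin n → ℝ) (i : Fin n) :
    |a i| ≤ Real.sqrt (∑ j, a j ^ 2) := by
  have h : a i ^ 2 ≤ ∑ j, a j ^ 2 :=
    Finset.single_le_sum (fun j _ => sq_nonneg (a j)) (Finset.mem_univ i)
  calc |a i| = Real.sqrt (a i ^ 2) := (Real.sqrt_sq_eq_abs _).symm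
    _ ≤ Real.sqrt (∑ j, a j ^ 2) := Real.sqrt_le_sqrt h

lemma one_le_prod_aux {n : ℕ} (x : Fin n → ℝ) (s : Finset (Fin n)) :
    (1:ℝ) ≤ ∏ j ∈ s, (1 + x j ^ 2) := by
  calc (1:ℝ) = ∏ _j ∈ s, (1:ℝ) := by simp
    _ ≤ ∏ j ∈ s, (1 + x j ^ 2) :=
      Finset.prod_le_prod (fun j _ => zero_le_one) (fun j _ => by nlinarith [sq_nonneg (x j)])

lemma one_le_prod_one_add_sq {n : ℕ} (x : Fin n → ℝ) :
    (1:ℝ) ≤ ∏ j, (1 + x j ^ 2) := one_le_prod_aux x Finset.univ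

lemma one_add_sq_le_prod {n : ℕ} (x : Fin n → ℝ) (i : Fin n) :
    1 + x i ^ 2 ≤ ∏ j, (1 + x j ^ 2) := by
  rw [← Finset.mul_prod_erase Finset.univ (fun j => 1 + x j ^ 2) (Finset.mem_univ i)]
  have h1 := one_le_prod_aux x (Finset.univ.erase i)
  nlinarith [sq_nonneg (x i)]

lemma grow_bound_pi {n m : ℕ} {c : ℝ} (hc : 0 ≤ c) (x : Fin n → ℝ) :
    c * (1 + Real.sqrt (∑ j, x j ^ 2)) ^ m
      ≤ (c * 2 ^ (n * m)) * ∏ j, (1 + x j ^ 2) ^ m := by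
  have h1 := sqrtsum_le x
  have h2 : (1 + Real.sqrt (∑ j, x j ^ 2)) ^ m ≤ (2 ^ n * ∏ j, (1 + x j ^ 2)) ^ m :=
    pow_le_pow_left₀ (by positivity) h1 m
  have h3 : ((2:ℝ) ^ n * ∏ j, (1 + x j ^ 2)) ^ m = 2 ^ (n * m) * ∏ j, (1 + x j ^ 2) ^ m := by
    rw [mul_pow, ← pow_mul, ← Finset.prod_pow]
  calc c * (1 + Real.sqrt (∑ j, x j ^ 2)) ^ m
      ≤ c * (2 ^ (n * m) * ∏ j, (1 + x j ^ 2) ^ m) := by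
        rw [← h3]; exact mul_le_mul_of_nonneg_left h2 hc
    _ = (c * 2 ^ (n * m)) * ∏ j, (1 + x j ^ 2) ^ m := by ring

lemma grow_bound {m : ℕ} {c : ℝ} (hc : 0 ≤ c) (t S : ℝ) (hS : 0 ≤ S) :
    c * (1 + Real.sqrt (t ^ 2 + S)) ^ m
      ≤ (c * (1 + Real.sqrt S) ^ m * 2 ^ m) * (1 + t ^ 2) ^ m := by
  have h4 : Real.sqrt (t ^ 2 + S) ≤ |t| + Real.sqrt S := by
    have hle : t ^ 2 + S ≤ (|t| + Real.sqrt S) ^ 2 := by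
      nlinarith [Real.sq_sqrt hS, Real.sqrt_nonneg S, abs_nonneg t, sq_abs t]
    calc Real.sqrt (t ^ 2 + S) ≤ Real.sqrt ((|t| + Real.sqrt S) ^ 2) := Real.sqrt_le_sqrt hle
      _ = |t| + Real.sqrt S := Real.sqrt_sq (by positivity)
  have h5 : 1 + Real.sqrt (t ^ 2 + S) ≤ (1 + |t|) * (1 + Real.sqrt S) := by
    nlinarith [Real.sqrt_nonneg S, abs_nonneg t, mul_nonneg (abs_nonneg t) (Real.sqrt_nonneg S)]
  have h6 : (1 + Real.sqrt (t ^ 2 + S)) ^ m ≤ (1 + |t|) ^ m * (1 + Real.sqrt S) ^ m := by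
    rw [← mul_pow]
    exact pow_le_pow_left₀ (by positivity) h5 m
  have h7 : (1 + |t|) ^ m ≤ 2 ^ m * (1 + t ^ 2) ^ m := by
    rw [← mul_pow]
    exact pow_le_pow_left₀ (by positivity)
      (by nlinarith [abs_le_one_add_sq t, sq_nonneg t]) m
  calc c * (1 + Real.sqrt (t ^ 2 + S)) ^ m
      ≤ c * ((1 + |t|) ^ m * (1 + Real.sqrt S) ^ m) := mul_le_mul_of_nonneg_left h6 hc
    _ ≤ c * ((2 ^ m * (1 + t ^ 2) ^ m) * (1 + Real.sqrt S) ^ m) := by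
        refine mul_le_mul_of_nonneg_left (mul_le_mul_of_nonneg_right h7 (by positivity)) hc
    _ = (c * (1 + Real.sqrt S) ^ m * 2 ^ m) * (1 + t ^ 2) ^ m := by ring

lemma single_sq_sum {n : ℕ} (i : Fin n) :
    ∑ j, ((Pi.single i 1 : Fin n → ℝ) j) ^ 2 = 1 := by
  classical
  rw [Finset.sum_eq_single i]
  · simp
  · intro j _ hj
    simp [Pi.single_eq_of_ne hj]
  · intro hi
    exact absurd (Finset.mem_univ i) hi

lemma insertNth_eq_add_smul {N : ℕ} (i : Fin (N + 1)) (y : Fin N → ℝ) (t : ℝ) :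
    (i.insertNth t y : Fin (N + 1) → ℝ)
      = (i.insertNth 0 y : Fin (N + 1) → ℝ) + t • (Pi.single i 1 : Fin (N + 1) → ℝ) := by
  funext j
  refine Fin.succAboveCases i ?_ ?_ j
  · simp
  · intro k
    simp [Pi.single_eq_of_ne (Fin.succAbove_ne i k)]

lemma hasDerivAt_insertNth {N : ℕ} (i : Fin (N + 1)) (y : Fin N → ℝ) (t : ℝ) :
    HasDerivAt (fun s : ℝ => (i.insertNth s y : Fin (N + 1) → ℝ))
      (Pi.single i 1 : Fin (N + 1) → ℝ) t := by
  have h : (fun s : ℝ => (i.insertNth s y : Fin (N + 1) → ℝ))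
      = fun s => (i.insertNth 0 y : Fin (N + 1) → ℝ) + s • (Pi.single i 1 : Fin (N + 1) → ℝ) :=
    funext fun s => insertNth_eq_add_smul i y s
  rw [h]
  simpa using ((hasDerivAt_id t).smul_const (Pi.single i (1:ℝ) : Fin (N + 1) → ℝ)).const_add
    (i.insertNth 0 y : Fin (N + 1) → ℝ)

lemma contDiff_insertNth {N : ℕ} (i : Fin (N + 1)) (y : Fin N → ℝ) :
    ContDiff ℝ 1 (fun s : ℝ => (i.insertNth s y : Fin (N + 1) → ℝ)) := by
  have h : (fun s : ℝ => (i.insertNth s y : Fin (N + 1) → ℝ))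
      = fun s => (i.insertNth 0 y : Fin (N + 1) → ℝ) + s • (Pi.single i 1 : Fin (N + 1) → ℝ) :=
    funext fun s => insertNth_eq_add_smul i y s
  rw [h]
  exact contDiff_const.add (contDiff_id.smul contDiff_const)

lemma sum_insertNth_sq {N : ℕ} (i : Fin (N + 1)) (t : ℝ) (y : Fin N → ℝ) :
    ∑ j, ((i.insertNth t y : Fin (N + 1) → ℝ) j) ^ 2 = t ^ 2 + ∑ k, (y k) ^ 2 := by
  rw [Fin.sum_univ_succAbove (fun j => ((i.insertNth t y : Fin (N + 1) → ℝ) j) ^ 2) i]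
  simp

lemma integrable_pi_gauss_of_bound {n k : ℕ} (C : ℝ) (h : (Fin n → ℝ) → ℝ)
    (hcont : Continuous h) (hb : ∀ x, |h x| ≤ C * ∏ i, (1 + x i ^ 2) ^ k) :
    Integrable h (Measure.pi fun _ : Fin n => gaussianReal 0 1) := by
  have hw : Integrable (fun t : ℝ => (1 + t ^ 2) ^ k) (gaussianReal 0 1) := by
    refine integrable_gauss_of_bound k 1 _ (by continuity) fun x => ?_
    rw [abs_of_nonneg (by positivity), one_mul]
  have hprod : Integrable (fun x : Fin n → ℝ => ∏ i, (1 + x i ^ 2) ^ k)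
      (Measure.pi fun _ : Fin n => gaussianReal 0 1) := by
    letI : MeasureSpace ℝ := ⟨gaussianReal 0 1⟩
    haveI : SigmaFinite (volume : Measure ℝ) := by
      change SigmaFinite (gaussianReal 0 1); infer_instance
    exact Integrable.fin_nat_prod (f := fun _ t => (1 + t ^ 2) ^ k) fun i => hw
  exact Integrable.mono' (hprod.const_mul C) hcont.aestronglyMeasurable
    (ae_of_all _ fun x => by rw [Real.norm_eq_abs]; exact hb x)

lemma pi_fubini {N : ℕ} (i : Fin (N + 1)) (h : (Fin (N + 1) → ℝ) → ℝ)
    (hint : Integrable h (Measure.pi fun _ : Fin (N + 1) => gaussianReal 0 1)) :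
    ∫ x, h x ∂(Measure.pi fun _ : Fin (N + 1) => gaussianReal 0 1)
      = ∫ y, (∫ t, h (i.insertNth t y) ∂(gaussianReal 0 1))
          ∂(Measure.pi fun _ : Fin N => gaussianReal 0 1) := by
  set e := MeasurableEquiv.piFinSuccAbove (fun _ : Fin (N + 1) => ℝ) i with he
  have hp := measurePreserving_piFinSuccAbove (fun _ : Fin (N + 1) => gaussianReal 0 1) i
  have h1 : ∫ x, h x ∂(Measure.pi fun _ : Fin (N + 1) => gaussianReal 0 1)
      = ∫ p, h (e.symm p)
          ∂((gaussianReal 0 1).prod (Measure.pi fun _ : Fin N => gaussianReal 0 1)) := by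
    rw [← hp.integral_comp' (g := fun p => h (e.symm p))]
    have hx : ∀ x : Fin (N + 1) → ℝ, e.symm (e x) = x := fun x => e.symm_apply_apply x
    simp only [← he, hx]
  have h2 : Integrable (fun p => h (e.symm p))
      ((gaussianReal 0 1).prod (Measure.pi fun _ : Fin N => gaussianReal 0 1)) := by
    have := (hp.symm).integrable_comp_emb e.symm.measurableEmbedding (g := h)
    exact this.2 hint
  rw [h1, MeasureTheory.integral_prod_symm _ h2]
  rfl

end SteinN
section Main

lemma stein_n {N : ℕ} (f : (Fin (N + 1) → ℝ) → (Fin (N + 1) → ℝ)) (hf : ContDiff ℝ 1 f)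
    (c : ℝ) (hc : 0 < c) (m : ℕ)
    (hgrow : ∀ x : Fin (N + 1) → ℝ,
      Real.sqrt (∑ i, f x i ^ 2) ≤ c * (1 + Real.sqrt (∑ i, x i ^ 2)) ^ m)
    (hop : ∀ x v : Fin (N + 1) → ℝ,
      Real.sqrt (∑ i, (fderiv ℝ f x v i) ^ 2)
        ≤ c * (1 + Real.sqrt (∑ i, x i ^ 2)) ^ m * Real.sqrt (∑ i, v i ^ 2))
    (i : Fin (N + 1))
    (hIxf : Integrable (fun x => x i * f x i)
      (Measure.pi fun _ : Fin (N + 1) => gaussianReal 0 1))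
    (hID : Integrable (fun x => fderiv ℝ f x (Pi.single i 1) i)
      (Measure.pi fun _ : Fin (N + 1) => gaussianReal 0 1)) :
    ∫ x, x i * f x i ∂(Measure.pi fun _ : Fin (N + 1) => gaussianReal 0 1)
      = ∫ x, fderiv ℝ f x (Pi.single i 1) i
          ∂(Measure.pi fun _ : Fin (N + 1) => gaussianReal 0 1) := by
  rw [pi_fubini i _ hIxf, pi_fubini i _ hID]
  refine integral_congr_ae (ae_of_all _ fun y => ?_)
  simp only [Fin.insertNth_apply_same]
  have hS : 0 ≤ ∑ k, (y k) ^ 2 := Finset.sum_nonneg fun k _ => sq_nonneg _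
  have hgC : ContDiff ℝ 1 (fun t => f (i.insertNth t y) i) :=
    contDiff_pi.1 (hf.comp (contDiff_insertNth i y)) i
  have hder : ∀ t, HasDerivAt (fun t => f (i.insertNth t y) i)
      (fderiv ℝ f (i.insertNth t y) (Pi.single i 1) i) t := by
    intro t
    have h1 := hasDerivAt_insertNth i y t
    have h2 := ((hf.differentiable one_ne_zero (i.insertNth t y)).hasFDerivAt).comp_hasDerivAt t h1
    exact hasDerivAt_pi.1 h2 i
  have hb0 : ∀ t, |(fun t => f (i.insertNth t y) i) t|
      ≤ (c * (1 + Real.sqrt (∑ k, (y k) ^ 2)) ^ m * 2 ^ m) * (1 + t ^ 2) ^ m := by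
    intro t
    have h1 := abs_apply_le_sqrt_sum (f (i.insertNth t y)) i
    have h2 := hgrow (i.insertNth t y)
    rw [sum_insertNth_sq] at h2
    exact h1.trans (h2.trans (grow_bound hc.le t _ hS))
  have hb1 : ∀ t, |deriv (fun t => f (i.insertNth t y) i) t|
      ≤ (c * (1 + Real.sqrt (∑ k, (y k) ^ 2)) ^ m * 2 ^ m) * (1 + t ^ 2) ^ m := by
    intro t
    rw [(hder t).deriv]
    have h1 := abs_apply_le_sqrt_sum (fderiv ℝ f (i.insertNth t y) (Pi.single i 1)) i
    have h2 := hop (i.insertNth t y) (Pi.single i 1)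
    rw [sum_insertNth_sq, single_sq_sum, Real.sqrt_one, mul_one] at h2
    exact h1.trans (h2.trans (grow_bound hc.le t _ hS))
  have hst := stein1 _ hgC _ m hb0 hb1
  calc ∫ t, t * f (i.insertNth t y) i ∂(gaussianReal 0 1)
      = ∫ t, deriv (fun t => f (i.insertNth t y) i) t ∂(gaussianReal 0 1) := hst
    _ = ∫ t, fderiv ℝ f (i.insertNth t y) (Pi.single i 1) i ∂(gaussianReal 0 1) := by
        congr 1
        funext t
        exact (hder t).deriv


/-- **DSM = n + 2·ISM.** Let `f : ℝⁿ → ℝⁿ` be continuously differentiable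
with `‖f(x)‖ ≤ c(1+‖x‖)^m` and operator-norm bound `‖Df(x)‖_op ≤ c(1+‖x‖)^m` (all norms
Euclidean; the operator-norm bound is expressed as `‖Df(x)v‖ ≤ c(1+‖x‖)^m ‖v‖` for all
`v`). If `ε ~ N(0, Iₙ)` (independent standard normal coordinates), then
`E‖ε + f(ε)‖² = n + 2 E[Tr(Df(ε)) + ½‖f(ε)‖²]`, where
`Tr(Df(ε)) = ∑ᵢ (Df(ε)eᵢ)ᵢ` is the divergence of `f` at `ε`. -/
theorem dsm_eq_n_add_two_ism
    (n : ℕ) (f : (Fin n → ℝ) → (Fin n → ℝ)) (hf : ContDiff ℝ 1 f)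
    (c : ℝ) (hc : 0 < c) (m : ℕ)
    (hgrow : ∀ x : Fin n → ℝ,
      Real.sqrt (∑ i, f x i ^ 2) ≤ c * (1 + Real.sqrt (∑ i, x i ^ 2)) ^ m)
    (hop : ∀ x v : Fin n → ℝ,
      Real.sqrt (∑ i, (fderiv ℝ f x v i) ^ 2)
        ≤ c * (1 + Real.sqrt (∑ i, x i ^ 2)) ^ m * Real.sqrt (∑ i, v i ^ 2))
    (μ : Measure (Fin n → ℝ))
    (hμ : μ = Measure.pi fun _ => gaussianReal 0 1) :
    (∫ ε, ∑ i, (ε i + f ε i) ^ 2 ∂μ)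
      = n + 2 * ∫ ε, ((∑ i, fderiv ℝ f ε (Pi.single i 1) i)
          + (1 / 2) * ∑ i, (f ε i) ^ 2) ∂μ := by
  subst hμ
  cases n with
  | zero => simp
  | succ N =>
    have hfc : Continuous f := hf.continuous
    have hDc : Continuous (fun x => fderiv ℝ f x) := hf.continuous_fderiv one_ne_zero
    have bound_f : ∀ (x : Fin (N + 1) → ℝ) i,
        |f x i| ≤ (c * 2 ^ ((N + 1) * m)) * ∏ j, (1 + x j ^ 2) ^ m := by
      intro x i
      exact (abs_apply_le_sqrt_sum (f x) i).trans ((hgrow x).trans (grow_bound_pi hc.le x))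
    have bound_D : ∀ (x : Fin (N + 1) → ℝ) i,
        |fderiv ℝ f x (Pi.single i 1) i| ≤ (c * 2 ^ ((N + 1) * m)) * ∏ j, (1 + x j ^ 2) ^ m := by
      intro x i
      have h2 := hop x (Pi.single i 1)
      rw [single_sq_sum, Real.sqrt_one, mul_one] at h2
      exact (abs_apply_le_sqrt_sum (fderiv ℝ f x (Pi.single i 1)) i).trans
        (h2.trans (grow_bound_pi hc.le x))
    have hIsq : ∀ i, Integrable (fun x : Fin (N + 1) → ℝ => x i ^ 2)
        (Measure.pi fun _ => gaussianReal 0 1) := by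
      intro i
      refine integrable_pi_gauss_of_bound (k := 1) 1 _ (by continuity) fun x => ?_
      rw [abs_of_nonneg (sq_nonneg _), one_mul]
      simp only [pow_one]
      exact le_trans (by nlinarith [sq_nonneg (x i)]) (one_add_sq_le_prod x i)
    have hIxf : ∀ i, Integrable (fun x : Fin (N + 1) → ℝ => x i * f x i)
        (Measure.pi fun _ => gaussianReal 0 1) := by
      intro i
      refine integrable_pi_gauss_of_bound (k := m + 1) (c * 2 ^ ((N + 1) * m)) _
        ((continuous_apply i).mul ((continuous_apply i).comp hfc)) fun x => ?_
      have h1 : |x i| ≤ ∏ j, (1 + x j ^ 2) :=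
        (abs_le_one_add_sq (x i)).trans (one_add_sq_le_prod x i)
      have h2 := bound_f x i
      have hsplit : (∏ j, (1 + x j ^ 2) ^ (m + 1))
          = (∏ j, (1 + x j ^ 2) ^ m) * ∏ j, (1 + x j ^ 2) := by
        rw [← Finset.prod_mul_distrib]
        exact Finset.prod_congr rfl fun j _ => pow_succ _ m
      rw [abs_mul]
      calc |x i| * |f x i|
          ≤ (∏ j, (1 + x j ^ 2)) * ((c * 2 ^ ((N + 1) * m)) * ∏ j, (1 + x j ^ 2) ^ m) :=
            mul_le_mul h1 h2 (abs_nonneg _) (by positivity)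
        _ = (c * 2 ^ ((N + 1) * m)) * ∏ j, (1 + x j ^ 2) ^ (m + 1) := by rw [hsplit]; ring
    have hIf2 : ∀ i, Integrable (fun x : Fin (N + 1) → ℝ => f x i ^ 2)
        (Measure.pi fun _ => gaussianReal 0 1) := by
      intro i
      refine integrable_pi_gauss_of_bound (k := 2 * m) ((c * 2 ^ ((N + 1) * m)) ^ 2) _
        (((continuous_apply i).comp hfc).pow 2) fun x => ?_
      have h2 := bound_f x i
      have hpp : (∏ j, (1 + x j ^ 2) ^ m) ^ 2 = ∏ j, (1 + x j ^ 2) ^ (2 * m) := by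
        rw [← Finset.prod_pow]
        exact Finset.prod_congr rfl fun j _ => by rw [← pow_mul, mul_comm]
      calc |f x i ^ 2| = |f x i| ^ 2 := (pow_abs (f x i) 2).symm
        _ ≤ ((c * 2 ^ ((N + 1) * m)) * ∏ j, (1 + x j ^ 2) ^ m) ^ 2 :=
            pow_le_pow_left₀ (abs_nonneg _) h2 2
        _ = (c * 2 ^ ((N + 1) * m)) ^ 2 * ∏ j, (1 + x j ^ 2) ^ (2 * m) := by
            rw [mul_pow, hpp]
    have hID : ∀ i, Integrable (fun x : Fin (N + 1) → ℝ => fderiv ℝ f x (Pi.single i 1) i)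
        (Measure.pi fun _ => gaussianReal 0 1) := by
      intro i
      refine integrable_pi_gauss_of_bound (k := m) (c * 2 ^ ((N + 1) * m)) _
        ((continuous_apply i).comp (hDc.clm_apply continuous_const)) fun x => bound_D x i
    have hEsq : ∀ i, ∫ x : Fin (N + 1) → ℝ, x i ^ 2 ∂(Measure.pi fun _ => gaussianReal 0 1)
        = 1 := by
      intro i
      rw [pi_fubini i _ (hIsq i)]
      simp only [Fin.insertNth_apply_same, integral_sq_gauss]
      simp
    have hrw : (fun x : Fin (N + 1) → ℝ => ∑ i, (x i + f x i) ^ 2)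
        = fun x => (∑ i, x i ^ 2) + ((∑ i, 2 * (x i * f x i)) + ∑ i, f x i ^ 2) := by
      funext x
      rw [← Finset.sum_add_distrib, ← Finset.sum_add_distrib]
      exact Finset.sum_congr rfl fun i _ => by ring
    have iSq : Integrable (fun x : Fin (N + 1) → ℝ => ∑ i, x i ^ 2)
        (Measure.pi fun _ => gaussianReal 0 1) := integrable_finset_sum _ fun i _ => hIsq i
    have i2xf : Integrable (fun x : Fin (N + 1) → ℝ => ∑ i, 2 * (x i * f x i))
        (Measure.pi fun _ => gaussianReal 0 1) :=
      integrable_finset_sum _ fun i _ => (hIxf i).const_mul 2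
    have iF2 : Integrable (fun x : Fin (N + 1) → ℝ => ∑ i, f x i ^ 2)
        (Measure.pi fun _ => gaussianReal 0 1) := integrable_finset_sum _ fun i _ => hIf2 i
    have iD : Integrable (fun x : Fin (N + 1) → ℝ => ∑ i, fderiv ℝ f x (Pi.single i 1) i)
        (Measure.pi fun _ => gaussianReal 0 1) := integrable_finset_sum _ fun i _ => hID i
    have e1 : ∫ x : Fin (N + 1) → ℝ, ∑ i, x i ^ 2 ∂(Measure.pi fun _ => gaussianReal 0 1)
        = ((N : ℝ) + 1) := by
      rw [integral_finset_sum _ fun i _ => hIsq i]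
      simp [hEsq]
    have e2 : ∫ x : Fin (N + 1) → ℝ, ∑ i, 2 * (x i * f x i)
          ∂(Measure.pi fun _ => gaussianReal 0 1)
        = 2 * ∫ x : Fin (N + 1) → ℝ, ∑ i, fderiv ℝ f x (Pi.single i 1) i
          ∂(Measure.pi fun _ => gaussianReal 0 1) := by
      rw [integral_finset_sum _ fun i _ => (hIxf i).const_mul 2,
        integral_finset_sum _ fun i _ => hID i, Finset.mul_sum]
      refine Finset.sum_congr rfl fun i _ => ?_
      rw [integral_const_mul, stein_n f hf c hc m hgrow hop i (hIxf i) (hID i)]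
    have e3 : ∫ x : Fin (N + 1) → ℝ, ((∑ i, fderiv ℝ f x (Pi.single i 1) i)
          + (1 / 2) * ∑ i, f x i ^ 2) ∂(Measure.pi fun _ => gaussianReal 0 1)
        = (∫ x : Fin (N + 1) → ℝ, ∑ i, fderiv ℝ f x (Pi.single i 1) i
            ∂(Measure.pi fun _ => gaussianReal 0 1))
          + (1 / 2) * ∫ x : Fin (N + 1) → ℝ, ∑ i, f x i ^ 2
            ∂(Measure.pi fun _ => gaussianReal 0 1) := by
      have iF2' : Integrable (fun x : Fin (N + 1) → ℝ => (1 / 2 : ℝ) * ∑ i, f x i ^ 2)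
          (Measure.pi fun _ => gaussianReal 0 1) := iF2.const_mul (1 / 2)
      rw [integral_add iD iF2', integral_const_mul]
    have iRest : Integrable (fun x : Fin (N + 1) → ℝ =>
        (∑ i, 2 * (x i * f x i)) + ∑ i, f x i ^ 2)
        (Measure.pi fun _ => gaussianReal 0 1) := i2xf.add iF2
    rw [hrw, integral_add iSq iRest, integral_add i2xf iF2, e1, e2, e3]
    push_cast
    ring
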